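/- Let γ > 0 and δ be real numbers. If some derivation of the Lie algebra rh₃ = h₃ × ℝ has characteristic polynomial X(X − γ)·(X² − 2δX + (δ² + 1)), then δ = 0 or γ = 2δ. -/

import Mathlib

set_option linter.unusedTactic false
set_option linter.unnecessarySeqFocus false
set_option linter.unreachableTactic false

open Polynomial

/-- The 3-dimensional Heisenberg Lie algebra `h₃`: the real vector space `Fin 3 → ℝ`
with basis `e₁, e₂, e₃` and only nonzero bracket `⁅e₁, e₂⁆ = e₃`. -/
def H3 : Type := Fin 3 → ℝ

noncomputable instance : AddCommGroup H3 := Pi.addCommGroup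
noncomputable instance : Module ℝ H3 := Pi.module _ _ _
instance : FiniteDimensional ℝ H3 := inferInstanceAs (FiniteDimensional ℝ (Fin 3 → ℝ))

lemma H3.add_apply (x y : H3) (i : Fin 3) : (x + y) i = x i + y i := rfl
lemma H3.smul_apply (r : ℝ) (x : H3) (i : Fin 3) : (r • x) i = r * x i := rfl

noncomputable instance : LieRing H3 :=
  { (inferInstance : AddCommGroup H3) with
    bracket := fun x y => ![0, 0, x 0 * y 1 - x 1 * y 0]
    add_lie := by
      intro x y z
      show (![_,_,_] : Fin 3 → ℝ) = ![_,_,_] + ![_,_,_]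
      funext i
      fin_cases i <;> simp [H3.add_apply] <;> erw [H3.add_apply] <;> simp <;> ring
    lie_add := by
      intro x y z
      show (![_,_,_] : Fin 3 → ℝ) = ![_,_,_] + ![_,_,_]
      funext i
      fin_cases i <;> simp [H3.add_apply] <;> erw [H3.add_apply] <;> simp <;> ring
    lie_self := by
      intro x
      show (![_,_,_] : Fin 3 → ℝ) = 0
      funext i
      fin_cases i <;> simp <;> ring
    leibniz_lie := by
      intro x y z
      show (![_,_,_] : Fin 3 → ℝ) = ![_,_,_] + ![_,_,_]
      funext i
      fin_cases i <;> simp [H3.add_apply] <;> erw [H3.add_apply] <;> simp <;> ring }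

noncomputable instance : LieAlgebra ℝ H3 :=
  { lie_smul := by
      intro r x y
      show (![_,_,_] : Fin 3 → ℝ) = r • ![_,_,_]
      funext i
      fin_cases i <;> simp [H3.smul_apply] <;> erw [H3.smul_apply] <;> simp <;> ring }

/-- `rh₃ := h₃ × ℝ`, the product Lie algebra of the Heisenberg Lie algebra `h₃` with the
1-dimensional abelian Lie algebra `ℝ`. -/
def RH3 : Type := H3 × ℝ

noncomputable instance : AddCommGroup RH3 := inferInstanceAs (AddCommGroup (H3 × ℝ))
noncomputable instance : Module ℝ RH3 := inferInstanceAs (Module ℝ (H3 × ℝ))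
instance : FiniteDimensional ℝ RH3 := inferInstanceAs (FiniteDimensional ℝ (H3 × ℝ))

noncomputable instance : LieRing RH3 :=
  { (inferInstance : AddCommGroup RH3) with
    bracket := fun x y => (⁅x.1, y.1⁆, 0)
    add_lie := by
      intro x y z
      show (⁅x.1 + y.1, z.1⁆, (0:ℝ)) = (⁅x.1, z.1⁆ + ⁅y.1, z.1⁆, 0 + 0)
      simp [add_lie]
    lie_add := by
      intro x y z
      show (⁅x.1, y.1 + z.1⁆, (0:ℝ)) = (⁅x.1, y.1⁆ + ⁅x.1, z.1⁆, 0 + 0)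
      simp [lie_add]
    lie_self := by
      intro x
      show (⁅x.1, x.1⁆, (0:ℝ)) = (0, 0)
      simp
    leibniz_lie := by
      intro x y z
      show (⁅x.1, ⁅y.1, z.1⁆⁆, (0:ℝ)) = (⁅⁅x.1, y.1⁆, z.1⁆ + ⁅y.1, ⁅x.1, z.1⁆⁆, 0 + 0)
      rw [← leibniz_lie]
      simp }

noncomputable instance : LieAlgebra ℝ RH3 :=
  { lie_smul := by
      intro r x y
      show (⁅x.1, r • y.1⁆, (0:ℝ)) = (r • ⁅x.1, y.1⁆, r • (0:ℝ))
      simp }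



/-!
A derivation `D` of `rh₃` preserves the centre `⟨e₃, e₄⟩`, and since `e₃ = ⁅e₁, e₂⁆` it acts on
`e₃` by the trace `t` of the map `A` it induces on `rh₃ / ⟨e₃, e₄⟩`. Hence the characteristic
polynomial of `D` is `χ_A · (X - t) · (X - s)`. The factor `X² - 2δX + δ² + 1` has no real root,
so it is irreducible and must be `χ_A`, which gives `t = 2δ`; and `t`, a real root, is `0` or `γ`.
-/

section Quadratic

variable (δ : ℝ)

lemma eval_X_sq_sub_two_mul_X_add (x : ℝ) :
    (X ^ 2 - C (2 * δ) * X + C (δ ^ 2 + 1)).eval x = (x - δ) ^ 2 + 1 := by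
  simp only [eval_add, eval_sub, eval_mul, eval_pow, eval_X, eval_C]
  ring

lemma natDegree_X_sq_sub_two_mul_X_add :
    (X ^ 2 - C (2 * δ) * X + C (δ ^ 2 + 1) : ℝ[X]).natDegree = 2 := by
  compute_degree!

lemma monic_X_sq_sub_two_mul_X_add : (X ^ 2 - C (2 * δ) * X + C (δ ^ 2 + 1) : ℝ[X]).Monic := by
  monicity!

lemma not_isRoot_X_sq_sub_two_mul_X_add (x : ℝ) :
    ¬ (X ^ 2 - C (2 * δ) * X + C (δ ^ 2 + 1)).IsRoot x := by
  rw [IsRoot, eval_X_sq_sub_two_mul_X_add]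
  positivity

lemma irreducible_X_sq_sub_two_mul_X_add :
    Irreducible (X ^ 2 - C (2 * δ) * X + C (δ ^ 2 + 1) : ℝ[X]) :=
  irreducible_of_degree_le_three_of_not_isRoot
    (by rw [natDegree_X_sq_sub_two_mul_X_add]; decide) (not_isRoot_X_sq_sub_two_mul_X_add δ)

end Quadratic

lemma eq_zero_or_eq_two_mul_of_charpoly_mul_eq (A : Matrix (Fin 2) (Fin 2) ℝ) {s γ δ : ℝ}
    (h : A.charpoly * ((X - C A.trace) * (X - C s))
      = X * (X - C γ) * (X ^ 2 - C (2 * δ) * X + C (δ ^ 2 + 1))) :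
    δ = 0 ∨ γ = 2 * δ := by
  set q : ℝ[X] := X ^ 2 - C (2 * δ) * X + C (δ ^ 2 + 1)
  have hq : Prime q := (irreducible_X_sq_sub_two_mul_X_add δ).prime
  have not_dvd_linear (r : ℝ) : ¬ q ∣ X - C r := fun hdvd => by
    have := natDegree_le_of_dvd hdvd (X_sub_C_ne_zero r)
    rw [natDegree_X_sq_sub_two_mul_X_add, natDegree_X_sub_C] at this
    omega
  have hdvd : q ∣ A.charpoly := by
    have : q ∣ A.charpoly * ((X - C A.trace) * (X - C s)) := h ▸ dvd_mul_left q _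
    rcases hq.dvd_or_dvd this with hA | hlinear
    · exact hA
    · rcases hq.dvd_or_dvd hlinear with h | h <;> exact absurd h (not_dvd_linear _)
  have hcharpoly : A.charpoly = q :=
    eq_of_monic_of_dvd_of_natDegree_le (monic_X_sq_sub_two_mul_X_add δ) A.charpoly_monic hdvd
      (by rw [Matrix.charpoly_natDegree_eq_dim, natDegree_X_sq_sub_two_mul_X_add]; rfl)
  have htrace : A.trace = 2 * δ := by
    have := congrArg (coeff · 1) hcharpoly
    simp only [Matrix.charpoly_fin_two, q, coeff_add, coeff_sub, coeff_X_pow, coeff_C_mul_X,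
      coeff_C] at this
    simpa using this
  have hroot : (X * (X - C γ) * q).IsRoot A.trace := by
    rw [← h]
    simp
  simp only [IsRoot, eval_mul, eval_X, eval_sub, eval_C, mul_eq_zero, sub_eq_zero] at hroot
  rcases hroot with (h0 | hγ) | hq0
  · exact .inl (by linarith)
  · exact .inr (by linarith)
  · exact absurd hq0 (not_isRoot_X_sq_sub_two_mul_X_add δ _)

namespace RH3

open Matrix

/-- Coordinates with respect to `e₁, e₂` (indexed by `inl`) and the centre `e₃, e₄` (by `inr`). -/
noncomputable def coordEquiv : RH3 ≃ₗ[ℝ] (Fin 2 ⊕ Fin 2 → ℝ) where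
  toFun x := Sum.elim ![x.1 0, x.1 1] ![x.1 2, x.2]
  invFun y := (![y (.inl 0), y (.inl 1), y (.inr 0)], y (.inr 1))
  map_add' x y := by ext (i | i) <;> fin_cases i <;> rfl
  map_smul' r x := by ext (i | i) <;> fin_cases i <;> rfl
  left_inv x := Prod.ext (funext fun i => by fin_cases i <;> rfl) rfl
  right_inv y := by ext (i | i) <;> fin_cases i <;> rfl

noncomputable def basis : Module.Basis (Fin 2 ⊕ Fin 2) ℝ RH3 := .ofEquivFun coordEquiv

lemma basis_inr_zero : basis (.inr 0) = ((![0, 0, 1] : H3), (0 : ℝ)) := by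
  rw [basis, Module.Basis.coe_ofEquivFun]
  refine Prod.ext (funext fun i => ?_) rfl
  fin_cases i <;> rfl

lemma lie_eq (x y : RH3) :
    ⁅x, y⁆ = (basis.repr x (.inl 0) * basis.repr y (.inl 1)
      - basis.repr x (.inl 1) * basis.repr y (.inl 0)) • basis (.inr 0) := by
  rw [basis_inr_zero]
  refine Prod.ext (funext fun i => ?_) (mul_zero _).symm
  fin_cases i
  exacts [(mul_zero _).symm, (mul_zero _).symm, (mul_one _).symm]

lemma lie_basis_inl_zero_inl_one : ⁅basis (.inl 0), basis (.inl 1)⁆ = basis (.inr 0) := by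
  rw [lie_eq]
  simp

lemma lie_basis_inr_one (x : RH3) : ⁅x, basis (.inr 1)⁆ = 0 := by
  rw [lie_eq]
  simp

variable (D : LieDerivation ℝ RH3 RH3)

lemma derivation_basis_inr_zero :
    D (basis (.inr 0)) = (basis.repr (D (basis (.inl 0))) (.inl 0)
      + basis.repr (D (basis (.inl 1))) (.inl 1)) • basis (.inr 0) := by
  have hleibniz := D.apply_lie_eq_add (basis (.inl 0)) (basis (.inl 1))
  rw [lie_basis_inl_zero_inl_one] at hleibniz
  rw [hleibniz, lie_eq, lie_eq, ← add_smul]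
  congr 1
  simp [add_comm]

lemma repr_derivation_basis_inr_one_inl (i : Fin 2) :
    basis.repr (D (basis (.inr 1))) (.inl i) = 0 := by
  have hcentral (k : Fin 2) : ⁅basis (.inl k), D (basis (.inr 1))⁆ = 0 := by
    simpa [lie_basis_inr_one] using (D.apply_lie_eq_add (basis (.inl k)) (basis (.inr 1))).symm
  fin_cases i
  · simpa [lie_eq, basis.ne_zero] using hcentral 1
  · simpa [lie_eq, basis.ne_zero] using hcentral 0

lemma exists_charpoly_derivation_eq :
    ∃ (A : Matrix (Fin 2) (Fin 2) ℝ) (s : ℝ),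
      D.toLinearMap.charpoly = A.charpoly * ((X - C A.trace) * (X - C s)) := by
  set M := LinearMap.toMatrix basis basis D.toLinearMap
  have hM (i j) : M i j = basis.repr (D (basis j)) i := LinearMap.toMatrix_apply _ _ _ _ _
  have h₁₂ : M.toBlocks₁₂ = 0 := by
    ext i j
    fin_cases j
    · simp [toBlocks₁₂, hM, derivation_basis_inr_zero]
    · simp [toBlocks₁₂, hM, repr_derivation_basis_inr_one_inl]
  have h₂₂ : M.toBlocks₂₂.IsUpperTriangular := by
    intro i j (hji : j < i)
    obtain ⟨rfl, rfl⟩ : i = 1 ∧ j = 0 := by omega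
    simp [toBlocks₂₂, hM, derivation_basis_inr_zero]
  have htrace : M.toBlocks₁₁.trace = M (.inr 0) (.inr 0) := by
    simp [trace_fin_two, toBlocks₁₁, hM, derivation_basis_inr_zero]
  refine ⟨M.toBlocks₁₁, M (.inr 1) (.inr 1), ?_⟩
  calc D.toLinearMap.charpoly
      = (fromBlocks M.toBlocks₁₁ M.toBlocks₁₂ M.toBlocks₂₁ M.toBlocks₂₂).charpoly := by
        rw [fromBlocks_toBlocks, LinearMap.charpoly_toMatrix]
    _ = _ := by
        rw [h₁₂, charpoly_fromBlocks_zero₁₂, charpoly_of_isUpperTriangular _ h₂₂,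
          Fin.prod_univ_two, htrace]
        rfl

end RH3

theorem charpoly_derivation_rh3_r4_gamma_delta_general (γ δ : ℝ)
    (h : ∃ D : LieDerivation ℝ RH3 RH3,
      LinearMap.charpoly D.toLinearMap
        = X * (X - C γ) * (X ^ 2 - C (2 * δ) * X + C (δ ^ 2 + 1))) :
    δ = 0 ∨ γ = 2 * δ := by
  obtain ⟨D, hD⟩ := h
  obtain ⟨A, s, hA⟩ := RH3.exists_charpoly_derivation_eq D
  exact eq_zero_or_eq_two_mul_of_charpoly_mul_eq A (hA ▸ hD)

/-- If `γ > 0` and some derivation of `rh₃ = h₃ × ℝ` has characteristic polynomial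
`X * (X - γ) * (X² - 2δX + (δ² + 1))`, then `δ = 0` or `γ = 2δ`. -/
theorem charpoly_derivation_rh3_r4_gamma_delta (γ δ : ℝ) (hγ : 0 < γ)
    (h : ∃ D : LieDerivation ℝ RH3 RH3,
      LinearMap.charpoly D.toLinearMap
        = X * (X - C γ) * (X ^ 2 - C (2 * δ) * X + C (δ ^ 2 + 1))) :
    δ = 0 ∨ γ = 2 * δ :=
  charpoly_derivation_rh3_r4_gamma_delta_general γ δ h
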